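/- arXiv:1503.03572 — 3 statements merged into one kernel-verified Lean document; each statement's English description precedes it below -/
import Mathlib

section
/- The number of orientations of a cycle of length k with exactly i vertices of in-degree 2 equals 2 * C(k, 2i), for 0 ≤ i ≤ k/2. -/
/-!
Record an orientation by the direction of edge `0` and the set of vertices at which consecutive
edges change direction. Every such turn is a sink (in-degree 2) or a source (in-degree 0), and
there are as many sinks as sources, so an orientation with `i` sinks has `2i` turns. The record
determines the orientation, so it injects the `2^k` orientations into `Bool × {even subsets}`,
a set with `2 * 2^(k-1)` elements; hence it is a bijection, and the orientations with `i` sinks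
correspond to `Bool × {2i-subsets}`.
-/

open Finset

theorem Finset.two_mul_card_filter_even_card_powerset {α : Type*} {s : Finset α}
    (hs : s.Nonempty) : 2 * #{t ∈ s.powerset | Even #t} = 2 ^ #s := by
  have hsign : ∀ t : Finset α, (1 + (-1) ^ #t : ℤ) = if Even #t then 2 else 0 := by
    intro t
    rcases Nat.even_or_odd #t with h | h
    · simp [h, h.neg_one_pow]
    · simp [Nat.not_even_iff_odd.2 h, h.neg_one_pow]
  have hsum : ∑ t ∈ s.powerset, (1 + (-1) ^ #t : ℤ) = 2 ^ #s := by
    rw [sum_add_distrib, sum_powerset_neg_one_pow_card_of_nonempty hs, sum_const, card_powerset]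
    simp
  simp only [hsign, ← sum_filter, sum_const, nsmul_eq_mul] at hsum
  exact_mod_cast (mul_comm _ _).trans hsum

section CycleOrientation

/- The cycle has vertex set `G` and edges `{v, v + a}`; `o v = true` orients the edge `{v, v + a}`
towards `v + a`. -/
variable {G : Type*} [AddGroup G] [Fintype G] (a : G) (o : G → Bool)

def sinks : Finset G := {v | o (v - a) = true ∧ o v = false}

def sources : Finset G := {v | o (v - a) = false ∧ o v = true}

def turns : Finset G := {v | o (v - a) ≠ o v}

theorem card_sinks_eq_card_sources : #(sinks a o) = #(sources a o) := by
  have hshift : ∑ v, (o (v - a)).toNat = ∑ v, (o v).toNat :=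
    Equiv.sum_comp (Equiv.subRight a) fun v => (o v).toNat
  have hstep : ∀ v, (o (v - a)).toNat + (if o (v - a) = false ∧ o v = true then 1 else 0)
      = (o v).toNat + (if o (v - a) = true ∧ o v = false then 1 else 0) := by
    intro v
    cases o (v - a) <;> cases o v <;> rfl
  have hsum := sum_congr rfl fun v (_ : v ∈ univ) => hstep v
  rw [sum_add_distrib, sum_add_distrib, hshift, ← card_filter, ← card_filter] at hsum
  exact (Nat.add_left_cancel hsum).symm

theorem card_turns : #(turns a o) = 2 * #(sinks a o) := by
  have hsplit : ∀ v, (if o (v - a) ≠ o v then 1 else 0)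
      = (if o (v - a) = true ∧ o v = false then 1 else 0)
        + (if o (v - a) = false ∧ o v = true then 1 else 0) := by
    intro v
    cases o (v - a) <;> cases o v <;> rfl
  rw [turns, card_filter, sum_congr rfl fun v _ => hsplit v, sum_add_distrib, ← card_filter,
    ← card_filter, two_mul]
  exact congrArg (#(sinks a o) + ·) (card_sinks_eq_card_sources a o).symm

end CycleOrientation

section FinCycle

variable {k : ℕ} [NeZero k]

open Fin.NatCast in
theorem turns_injective : Function.Injective fun o : Fin k → Bool => (o 0, turns 1 o) := by
  intro o o' h
  obtain ⟨h0, hturns⟩ := Prod.mk.inj h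
  have hnat : ∀ n : ℕ, o (n : Fin k) = o' n := by
    intro n
    induction n with
    | zero => exact h0
    | succ n ih =>
      have hmem : (o n ≠ o (n + 1)) ↔ (o' (n : Fin k) ≠ o' (n + 1)) := by
        simpa [turns] using congrArg (((n + 1 : ℕ) : Fin k) ∈ ·) hturns
      push_cast
      rw [← ih] at hmem
      revert hmem
      cases o n <;> cases o (n + 1) <;> cases o' (n + 1) <;> simp
  funext v
  simpa using hnat v

theorem image_turns_eq : univ.image (fun o : Fin k → Bool => (o 0, turns 1 o))
    = (univ : Finset Bool) ×ˢ ({S | Even #S} : Finset (Finset (Fin k))) := by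
  refine eq_of_subset_of_card_le ?_ ?_
  · intro p hp
    obtain ⟨o, -, rfl⟩ := mem_image.1 hp
    simp [card_turns]
  · rw [card_image_of_injective _ turns_injective, card_product, card_univ (α := Bool),
      Fintype.card_bool, ← powerset_univ, two_mul_card_filter_even_card_powerset univ_nonempty]
    simp

end FinCycle

theorem cycle_orientations_indegree_two_general (k i : ℕ) [NeZero k] :
    (Finset.univ.filter (fun o : Fin k → Bool =>
      (Finset.univ.filter (fun v : Fin k => o (v - 1) = true ∧ o v = false)).card = i)).card
      = 2 * Nat.choose k (2 * i) := by
  change #{o : Fin k → Bool | #(sinks 1 o) = i} = _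
  have htarget : #((univ : Finset Bool) ×ˢ powersetCard (2 * i) (univ : Finset (Fin k)))
      = 2 * k.choose (2 * i) := by
    simp [card_powersetCard]
  rw [← htarget]
  refine card_bij (fun o _ => (o 0, turns 1 o)) ?_ (fun o _ o' _ h => turns_injective h) ?_
  · intro o ho
    rw [mem_filter] at ho
    simp [card_turns, ho.2]
  · rintro ⟨b, S⟩ hbS
    have hS : #S = 2 * i := mem_powersetCard_univ.1 (mem_product.1 hbS).2
    have hbS' : (b, S) ∈ (univ : Finset Bool) ×ˢ ({S | Even #S} : Finset (Finset (Fin k))) := by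
      simp [hS]
    rw [← image_turns_eq] at hbS'
    obtain ⟨o, -, ho⟩ := mem_image.1 hbS'
    obtain ⟨rfl, rfl⟩ := Prod.mk.inj ho
    refine ⟨o, ?_, rfl⟩
    have hturns := card_turns 1 o
    simp only [mem_filter, mem_univ, true_and]
    omega

/-- Orient the edges of a cycle on `k` vertices (vertex set `Fin k`, edge `v` joining
`v` and `v+1`) by a function `o : Fin k → Bool`, where `o v = true` means edge `v`
is oriented from `v` to `v+1`. Vertex `v` has in-degree 2 iff edge `v-1` points to `v`
(`o (v-1) = true`) and edge `v` points to `v` (`o v = false`). The number of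
orientations with exactly `i` vertices of in-degree 2 equals `2 * C(k, 2i)`. -/
theorem cycle_orientations_indegree_two (k i : ℕ) [NeZero k] (hk : 3 ≤ k)
    (hi : 2 * i ≤ k) :
    (Finset.univ.filter (fun o : Fin k → Bool =>
      (Finset.univ.filter (fun v : Fin k => o (v - 1) = true ∧ o v = false)).card = i)).card
      = 2 * Nat.choose k (2 * i) :=
  cycle_orientations_indegree_two_general k i
end

section
/- Every eigenvalue of B = (1/10)*[[−92,33,−33,−33,33],[33,−117,−8,−8,8],[−33,−8,−117,8,−8],[−33,−8,8,−117,−8],[33,8,−8,−8,−117]] is less than −2.6. -/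
/-!
An eigenvalue `μ` with eigenvector `v` satisfies `μ (v ⬝ᵥ v) = v ⬝ᵥ B v`, so it suffices that the
quadratic form of `-10 B - 26 I` is positive definite. After flipping the signs of `x 2` and `x 3`,
`B` becomes `-125/10 I` plus a matrix that only sees `x 0` and `s = x 1 - x 2 - x 3 + x 4`; splitting
each remaining coordinate into `±s/4` and a deviation from it writes that form as a sum of squares.
-/

open Matrix

theorem Matrix.eigenvalue_lt_of_dotProduct_mulVec_lt {n R : Type*} [Fintype n] [Field R]
    [LinearOrder R] [IsStrictOrderedRing R] {A : Matrix n n R} {c μ : R} {v : n → R}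
    (hA : ∀ x, x ≠ 0 → x ⬝ᵥ A *ᵥ x < c * (x ⬝ᵥ x)) (hv : v ≠ 0) (hμ : A *ᵥ v = μ • v) :
    μ < c := by
  have hpos : 0 < v ⬝ᵥ v :=
    (Finset.sum_nonneg fun i _ => mul_self_nonneg (v i)).lt_of_ne
      (Ne.symm (dotProduct_self_eq_zero.not.mpr hv))
  have hlt := hA v hv
  rw [hμ, dotProduct_smul, smul_eq_mul] at hlt
  exact lt_of_mul_lt_mul_right hlt hpos.le

noncomputable def B : Matrix (Fin 5) (Fin 5) ℝ :=
  (1 / 10 : ℝ) • !![(-92 : ℝ), 33, -33, -33, 33;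
    33, -117, -8, -8, 8;
    -33, -8, -117, 8, -8;
    -33, -8, 8, -117, -8;
    33, 8, -8, -8, -117]

lemma B_quadratic_form_eq_sum_sq (x : Fin 5 → ℝ) :
    let s := x 1 - x 2 - x 3 + x 4;
    -10 * (x ⬝ᵥ B *ᵥ x) - 26 * (x ⬝ᵥ x) =
      66 * (x 0 - s / 2) ^ 2 + (s / 2) ^ 2 +
        99 * ((x 1 - s / 4) ^ 2 + (x 2 + s / 4) ^ 2 + (x 3 + s / 4) ^ 2 + (x 4 - s / 4) ^ 2) := by
  simp only [dotProduct, mulVec, B, one_div, Matrix.smul_apply, of_apply, cons_val', cons_val_fin_one,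
    smul_eq_mul, Fin.sum_univ_five, Fin.isValue, cons_val_zero, cons_val_one, cons_val, mul_neg, neg_mul]
  ring

lemma B_dotProduct_mulVec_lt (x : Fin 5 → ℝ) (hx : x ≠ 0) :
    x ⬝ᵥ B *ᵥ x < -2.6 * (x ⬝ᵥ x) := by
  have hsos := B_quadratic_form_eq_sum_sq x
  set s := x 1 - x 2 - x 3 + x 4
  by_contra! hge
  have hterms : x 0 - s / 2 = 0 ∧ s / 2 = 0 ∧ x 1 - s / 4 = 0 ∧ x 2 + s / 4 = 0 ∧
      x 3 + s / 4 = 0 ∧ x 4 - s / 4 = 0 := by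
    refine ⟨?_, ?_, ?_, ?_, ?_, ?_⟩ <;> refine (pow_eq_zero_iff two_ne_zero).mp ?_ <;>
      nlinarith [sq_nonneg (x 0 - s / 2), sq_nonneg (s / 2), sq_nonneg (x 1 - s / 4),
        sq_nonneg (x 2 + s / 4), sq_nonneg (x 3 + s / 4), sq_nonneg (x 4 - s / 4)]
  obtain ⟨h0, hs, h1, h2, h3, h4⟩ := hterms
  refine hx (funext fun i => ?_)
  fin_cases i <;>
    simp only [Fin.zero_eta, Fin.mk_one, Fin.reduceFinMk, Fin.isValue, Pi.zero_apply] <;> linarith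

theorem eigenvalues_lt :
    ∀ μ : ℝ, (∃ v : Fin 5 → ℝ, v ≠ 0 ∧
      ((1 / 10 : ℝ) • !![(-92 : ℝ), 33, -33, -33, 33;
        33, -117, -8, -8, 8;
        -33, -8, -117, 8, -8;
        -33, -8, 8, -117, -8;
        33, 8, -8, -8, -117]).mulVec v = μ • v) → μ < -2.6 :=
  fun _ ⟨_, hv, hμ⟩ => eigenvalue_lt_of_dotProduct_mulVec_lt B_dotProduct_mulVec_lt hv hμ
end

section
/- For the function f̄(z₀₁, z₁₀) obtained from f by setting z = z₀₀ = z₁₁ = 0, the difference of the two polynomials arising from setting ∂f̄/∂z₀₁ = 0 and ∂f̄/∂z₁₀ = 0 factors as −2(6z₀₁ − 11 + 6z₁₀)(z₀₁ − z₁₀); consequently any interior stationary point of f̄ on [0,1/2]² with z₀₁+z₁₀ ≤ 1 has z₀₁ = z₁₀. -/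
/-!
At an interior point, `∂f̄/∂z₀₁ = log ((3/2 + z₀₁ + z₁₀)(1/2 - z₀₁)) - log (4 (1 - z₀₁ - z₁₀) z₀₁)`,
so stationarity in `z₀₁` is `P₁ = 0`, and by the symmetry of `f̄` stationarity in `z₁₀` is
`P₂ = 0`. Their difference is `½ (6z₀₁ + 6z₁₀ - 11)(z₀₁ - z₁₀)`, whose first factor is negative
on `(0, 1/2)²`.
-/

open Real

noncomputable def fbar (u v : ℝ) : ℝ :=
  let h : ℝ → ℝ := fun x => x * log x
  (9 / 4 - u - v) * log 4 + log 5 - h 5 + h (5 / 2)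
    + h (1 - u - v) + h (5 / 2 - (1 - u - v))
    - h u - h v - h (1 / 2 - u) - h (1 / 2 - v)

theorem fbar_comm (u v : ℝ) : fbar u v = fbar v u := by
  simp only [fbar]; ring_nf

theorem HasDerivAt.mul_log {f : ℝ → ℝ} {f' x : ℝ} (hf : HasDerivAt f f' x) (hx : f x ≠ 0) :
    HasDerivAt (fun t => f t * Real.log (f t)) ((Real.log (f x) + 1) * f') x :=
  (hasDerivAt_mul_log hx).comp x hf

theorem hasDerivAt_fbar_left {u v : ℝ} (hu : u ≠ 0) (hu' : 1 / 2 - u ≠ 0)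
    (hb : 1 - u - v ≠ 0) (hc : 3 / 2 + u + v ≠ 0) :
    HasDerivAt (fun t => fbar t v)
      (log (3 / 2 + u + v) + log (1 / 2 - u) - log 4 - log (1 - u - v) - log u) u := by
  have hb' : HasDerivAt (fun t => 1 - t - v) (-1) u := by
    simpa using ((hasDerivAt_id u).const_sub 1).sub_const v
  have hc' : 5 / 2 - (1 - u - v) = 3 / 2 + u + v := by ring
  have hid := hasDerivAt_id' u
  have := (((((((((hb'.add_const (5 / 4)).mul_const (log 4)).add_const
    (log 5 - 5 * log 5 + 5 / 2 * log (5 / 2))).add (hb'.mul_log hb)).add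
    ((hb'.const_sub (5 / 2)).mul_log (hc' ▸ hc))).sub (hid.mul_log hu)).sub_const
    (v * log v)).sub ((hid.const_sub (1 / 2)).mul_log hu')).sub_const
    ((1 / 2 - v) * log (1 / 2 - v)))
  refine (this.congr_deriv ?_).congr_of_eventuallyEq (.of_forall fun t => ?_)
  · rw [hc']; ring
  · simp only [fbar, Pi.add_apply, Pi.sub_apply]; ring_nf

theorem fbar_stationary_left {u v : ℝ} (hu₀ : 0 < u) (hu₁ : u < 1 / 2) (hv₀ : 0 < v)
    (hb : u + v < 1) (hd : deriv (fun t => fbar t v) u = 0) :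
    (3 / 2 + u + v) * (1 / 2 - u) = 4 * (1 - u - v) * u := by
  have hpos₁ : 0 < 3 / 2 + u + v := by linarith
  have hpos₂ : 0 < 1 / 2 - u := by linarith
  have hpos₃ : 0 < 1 - u - v := by linarith
  rw [(hasDerivAt_fbar_left hu₀.ne' hpos₂.ne' hpos₃.ne' hpos₁.ne').deriv] at hd
  refine log_injOn_pos (Set.mem_Ioi.mpr (by positivity)) (Set.mem_Ioi.mpr (by positivity)) ?_
  rw [log_mul hpos₁.ne' hpos₂.ne', log_mul (by positivity) hu₀.ne', log_mul four_ne_zero hpos₃.ne']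
  linarith

theorem fbar_stationary_right {u v : ℝ} (hu₀ : 0 < u) (hv₀ : 0 < v) (hv₁ : v < 1 / 2)
    (hb : u + v < 1) (hd : deriv (fun t => fbar u t) v = 0) :
    (3 / 2 + u + v) * (1 / 2 - v) = 4 * (1 - u - v) * v := by
  simp only [fbar_comm u] at hd
  convert fbar_stationary_left hv₀ hv₁ hu₀ (by linarith) hd using 1 <;> ring

/-- For `f̄` obtained from `f` by setting `z = z₀₀ = z₁₁ = 0`, the difference of the two
polynomials arising from the stationarity equations `∂f̄/∂z₀₁ = 0`, `∂f̄/∂z₁₀ = 0`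
factors as a multiple of `(6z₀₁ + 6z₁₀ − 11)(z₀₁ − z₁₀)`; consequently any interior
stationary point of `f̄` on `[0,1/2]²` with `z₀₁ + z₁₀ ≤ 1` has `z₀₁ = z₁₀`. -/
theorem fbar_stationary_symmetric :
    let h : ℝ → ℝ := fun x => x * Real.log x
    let fbar : ℝ → ℝ → ℝ := fun u v =>
      (9 / 4 - u - v) * Real.log 4 + Real.log 5 - h 5 + h (5 / 2)
        + h (1 - u - v) + h (5 / 2 - (1 - u - v))
        - h u - h v - h (1 / 2 - u) - h (1 / 2 - v)
    let P₁ : ℝ → ℝ → ℝ := fun u v => (3 / 2 + u + v) * (1 / 2 - u) - 4 * (1 - u - v) * u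
    let P₂ : ℝ → ℝ → ℝ := fun u v => (3 / 2 + u + v) * (1 / 2 - v) - 4 * (1 - u - v) * v
    (∀ u v : ℝ, P₁ u v - P₂ u v = (1 / 2) * (6 * u + 6 * v - 11) * (u - v)) ∧
    (∀ u v : ℝ, u ∈ Set.Ioo (0 : ℝ) (1 / 2) → v ∈ Set.Ioo (0 : ℝ) (1 / 2) →
      u + v ≤ 1 →
      deriv (fun t => fbar t v) u = 0 → deriv (fun t => fbar u t) v = 0 → u = v) := by
  intro h fbar P₁ P₂
  have factor : ∀ u v : ℝ, P₁ u v - P₂ u v = (1 / 2) * (6 * u + 6 * v - 11) * (u - v) := by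
    intro u v
    ring
  refine ⟨factor, fun u v ⟨hu₀, hu₁⟩ ⟨hv₀, hv₁⟩ _ hdu hdv => ?_⟩
  have hb : u + v < 1 := by linarith
  have hP₁ : P₁ u v = 0 := sub_eq_zero.mpr (fbar_stationary_left hu₀ hu₁ hv₀ hb hdu)
  have hP₂ : P₂ u v = 0 := sub_eq_zero.mpr (fbar_stationary_right hu₀ hv₀ hv₁ hb hdv)
  have hprod : (6 * u + 6 * v - 11) * (u - v) = 0 := by
    linear_combination -2 * factor u v + 2 * hP₁ - 2 * hP₂
  exact sub_eq_zero.mp ((mul_eq_zero.mp hprod).resolve_left (by linarith))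
end
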